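/- Let q and k be integers with q ≥ 2 and k ≥ 2. Then every connected chordal graph of order n = q(k+1) and minimum degree k has at least q·binomial(k+1,2) + 1 edges. -/

import Mathlib

open scoped Classical

/-- A graph is chordal if every cycle of length greater than three has a chord, i.e.,
an edge joining two vertices of the cycle that is not itself an edge of the cycle. -/
def SimpleGraph.IsChordal {V : Type*} (G : SimpleGraph V) : Prop :=
  ∀ ⦃v : V⦄ (w : G.Walk v v), w.IsCycle → 3 < w.length →
    ∃ a b : V, G.Adj a b ∧ a ∈ w.support ∧ b ∈ w.support ∧ s(a, b) ∉ w.edges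

/-!
If `G` had at most `q * C(k+1, 2)` edges, the degree sum `2|E| ≥ k n = 2 q C(k+1, 2)` would force
`G` to be `k`-regular. A chordal graph has a simplicial vertex `v` (Dirac). In a `k`-regular graph
the closed neighbourhood of `v` is a `(k+1)`-clique in which every vertex already has all of its
`k` neighbours, so it is a connected component, hence all of `G`, and `n = k + 1 < q (k + 1)`.

Dirac's lemma rests on minimal separators being cliques: if `x`, `y` in a minimal `a`–`b`
separator were non-adjacent, shortest `x`–`y` paths through the component of `a` and through that
of `b` would close up to a chordless cycle of length at least four.
-/

namespace SimpleGraph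

variable {V W : Type*} {G : SimpleGraph V} {H : SimpleGraph W}

theorem IsChordal.comap (f : H ↪g G) (h : G.IsChordal) : H.IsChordal := by
  intro v w hcyc hlen
  obtain ⟨a, b, hab, ha, hb, hnot⟩ :=
    h (w.map f.toHom) (hcyc.map f.injective) (by rwa [Walk.length_map])
  rw [Walk.support_map, List.mem_map] at ha hb
  obtain ⟨a, ha, rfl⟩ := ha
  obtain ⟨b, hb, rfl⟩ := hb
  refine ⟨a, b, f.map_adj_iff.mp hab, ha, hb, fun hmem => hnot ?_⟩
  rw [Walk.edges_map]
  exact List.mem_map_of_mem hmem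

def ReachableOutside (G : SimpleGraph V) (S : Set V) (u v : V) : Prop :=
  ∃ p : G.Walk u v, ∀ z ∈ p.support, z ∉ S

namespace ReachableOutside

variable {S : Set V} {u v w : V}

theorem refl (hu : u ∉ S) : G.ReachableOutside S u u := ⟨.nil, by simpa⟩

theorem of_adj (h : G.Adj u v) (hu : u ∉ S) (hv : v ∉ S) : G.ReachableOutside S u v :=
  ⟨h.toWalk, by simp [hu, hv]⟩

theorem left_notMem (h : G.ReachableOutside S u v) : u ∉ S :=
  h.elim fun p hp => hp u p.start_mem_support

theorem right_notMem (h : G.ReachableOutside S u v) : v ∉ S :=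
  h.elim fun p hp => hp v p.end_mem_support

theorem symm (h : G.ReachableOutside S u v) : G.ReachableOutside S v u := by
  obtain ⟨p, hp⟩ := h
  exact ⟨p.reverse, by simpa using hp⟩

theorem trans (h : G.ReachableOutside S u v) (h' : G.ReachableOutside S v w) :
    G.ReachableOutside S u w := by
  obtain ⟨p, hp⟩ := h
  obtain ⟨q, hq⟩ := h'
  exact ⟨p.append q, fun z hz => ((Walk.mem_support_append_iff p q).mp hz).elim (hp z) (hq z)⟩

theorem trans_adj (h : G.ReachableOutside S u v) (hvw : G.Adj v w) (hw : w ∉ S) :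
    G.ReachableOutside S u w :=
  h.trans (of_adj hvw h.right_notMem hw)

theorem exists_walk (h : G.ReachableOutside S u v) :
    ∃ p : G.Walk u v, ∀ z ∈ p.support, G.ReachableOutside S u z := by
  obtain ⟨p, hp⟩ := h
  exact ⟨p, fun z hz =>
    ⟨p.takeUntil z hz, fun y hy => hp y (p.support_takeUntil_subset_support hz hy)⟩⟩

end ReachableOutside

theorem Walk.exists_adj_reachableOutside {S : Set V} {u v : V} (p : G.Walk u v) (hu : u ∉ S)
    (hS : ∃ z ∈ p.support, z ∈ S) :
    ∃ s ∈ p.support, s ∈ S ∧ ∃ w, G.Adj w s ∧ G.ReachableOutside S u w := by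
  induction p with
  | nil => simp only [support_nil, List.mem_singleton, exists_eq_left] at hS; exact absurd hS hu
  | @cons u u' _ h q ih =>
    by_cases hu' : u' ∈ S
    · exact ⟨u', by simp, hu', u, h, .refl hu⟩
    obtain ⟨z, hz, hzS⟩ := hS
    rw [support_cons, List.mem_cons] at hz
    obtain ⟨s, hs, hsS, w, hws, hw⟩ :=
      ih hu' ⟨z, hz.resolve_left (by rintro rfl; exact hu hzS), hzS⟩
    exact ⟨s, by simp [hs], hsS, w, hws, (ReachableOutside.of_adj h hu hu').trans hw⟩

def Separates (G : SimpleGraph V) (S : Set V) (a b : V) : Prop :=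
  a ∉ S ∧ b ∉ S ∧ ¬G.ReachableOutside S a b

section Separates

variable {S : Set V} {a b : V}

theorem separates_comm : G.Separates S a b ↔ G.Separates S b a :=
  ⟨fun ⟨ha, hb, h⟩ => ⟨hb, ha, fun h' => h h'.symm⟩,
    fun ⟨hb, ha, h⟩ => ⟨ha, hb, fun h' => h h'.symm⟩⟩

theorem exists_minimal_separates [Finite V] (hab : a ≠ b) (hnadj : ¬G.Adj a b) :
    ∃ S, Minimal (G.Separates · a b) S := by
  refine exists_minimal_of_wellFoundedLT _ ⟨{a, b}ᶜ, by simp, by simp, ?_⟩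
  rintro ⟨_ | @⟨_, c, _, h, q⟩, hp⟩
  · exact hab rfl
  · have := hp c (List.mem_cons_of_mem _ q.start_mem_support)
    simp only [Set.mem_compl_iff, Set.mem_insert_iff, Set.mem_singleton_iff, not_not] at this
    rcases this with rfl | rfl
    exacts [h.ne rfl, hnadj h]

theorem exists_adj_reachableOutside_of_minimal_separates (hS : Minimal (G.Separates · a b) S)
    {s : V} (hs : s ∈ S) : ∃ u, G.Adj s u ∧ G.ReachableOutside S a u := by
  obtain ⟨ha, hb, -⟩ := hS.prop
  have hreach : G.ReachableOutside (S \ {s}) a b := by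
    by_contra h
    exact hS.not_prop_of_lt (Set.sdiff_singleton_ssubset.mpr hs)
      ⟨fun h' => ha h'.1, fun h' => hb h'.1, h⟩
  obtain ⟨w, hw⟩ := hreach
  obtain ⟨s', hs'w, hs'S, u, hu, hau⟩ := w.exists_adj_reachableOutside ha (by
    by_contra! h
    exact hS.prop.2.2 ⟨w, h⟩)
  obtain rfl : s' = s := by_contra fun hne => hw s' hs'w ⟨hs'S, hne⟩
  exact ⟨u, hu.symm, hau⟩

end Separates

namespace Walk

variable {u v x y c d : V}

theorem two_le_length (p : G.Walk u v) (hne : u ≠ v) (hnadj : ¬G.Adj u v) : 2 ≤ p.length := by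
  by_contra! h
  interval_cases hl : p.length
  exacts [hne (eq_of_length_eq_zero hl), hnadj (adj_of_length_eq_one hl)]

theorem mem_edges_of_length_eq_one : ∀ {p : G.Walk u v}, p.length = 1 → s(u, v) ∈ p.edges
  | cons _ nil, _ => by simp

theorem exists_shorter_of_adj_start (p : G.Walk c v) (hd : d ∈ p.support) (hcd : G.Adj c d)
    (hne : s(c, d) ∉ p.edges) :
    ∃ q : G.Walk c v, q.length < p.length ∧ q.support ⊆ p.support := by
  refine ⟨cons hcd (p.dropUntil d hd), ?_, ?_⟩
  · have hlen := congrArg length (p.take_spec hd)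
    have h2 : 2 ≤ (p.takeUntil d hd).length := by
      by_contra! h
      interval_cases hl : (p.takeUntil d hd).length
      · exact hcd.ne (eq_of_length_eq_zero hl)
      · exact hne (p.edges_takeUntil_subset_edges hd (mem_edges_of_length_eq_one hl))
    rw [length_append] at hlen
    rw [length_cons]
    omega
  · intro z hz
    rw [support_cons, List.mem_cons] at hz
    rcases hz with rfl | hz
    exacts [p.start_mem_support, p.support_dropUntil_subset_support hd hz]

theorem exists_shorter_of_chord (p : G.Walk u v) (hc : c ∈ p.support) (hd : d ∈ p.support)
    (hcd : G.Adj c d) (hne : s(c, d) ∉ p.edges) :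
    ∃ q : G.Walk u v, q.length < p.length ∧ q.support ⊆ p.support := by
  obtain ⟨p₁, p₂, rfl⟩ := mem_support_iff_exists_append.mp hc
  rw [edges_append, List.mem_append, not_or] at hne
  rcases (mem_support_append_iff p₁ p₂).mp hd with hd | hd
  · obtain ⟨q, hlen, hsub⟩ := p₁.reverse.exists_shorter_of_adj_start (by simpa using hd) hcd
      (by simpa using hne.1)
    refine ⟨q.reverse.append p₂, by simp only [length_append, length_reverse] at hlen ⊢; omega,
      fun z hz => ?_⟩
    rw [mem_support_append_iff, support_reverse, List.mem_reverse] at hz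
    rw [mem_support_append_iff]
    exact hz.imp_left fun hz => by simpa using hsub hz
  · obtain ⟨q, hlen, hsub⟩ := p₂.exists_shorter_of_adj_start hd hcd hne.2
    refine ⟨p₁.append q, by simp only [length_append]; omega, fun z hz => ?_⟩
    rw [mem_support_append_iff] at hz ⊢
    exact hz.imp_right fun hz => hsub hz

/-- Take a shortest walk supported on `p.support`. -/
theorem exists_isPath_isChordless (p : G.Walk u v) :
    ∃ q : G.Walk u v, q.IsPath ∧ q.IsChordless ∧ q.support ⊆ p.support := by
  obtain ⟨q, hq⟩ := exists_minimalFor_of_wellFoundedLT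
    (fun q : G.Walk u v => q.support ⊆ p.support) length ⟨p, List.Subset.refl _⟩
  have hbyp : q.bypass.support ⊆ p.support :=
    List.Subset.trans q.support_bypass_subset_support hq.prop
  refine ⟨q.bypass, q.bypass_isPath, isChordless_iff_forall_mem_edges.mpr
    fun c d hc hd hcd => ?_, hbyp⟩
  by_contra hne
  obtain ⟨r, hlt, hr⟩ := q.bypass.exists_shorter_of_chord hc hd hcd hne
  exact (q.length_bypass_le_length.trans (hq.le (List.Subset.trans hr hbyp))).not_gt hlt

end Walk

open Walk in
/-- If `x`, `y` are not adjacent, the two paths form a cycle of length at least four, and any chord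
of it would have to join the two interiors. -/
theorem IsChordal.adj_of_isChordless (hch : G.IsChordal) {x y : V} {P₁ P₂ : G.Walk x y}
    (hP₁ : P₁.IsPath) (hP₂ : P₂.IsPath) (hc₁ : P₁.IsChordless) (hc₂ : P₂.IsChordless)
    (hdisj : ∀ z ∈ P₁.support, z ∈ P₂.support → z = x ∨ z = y)
    (hcross : ∀ c ∈ P₁.support, ∀ d ∈ P₂.support, G.Adj c d → c = x ∨ c = y ∨ d = x ∨ d = y)
    (hxy : x ≠ y) : G.Adj x y := by
  by_contra hnadj
  have hlen₁ := P₁.two_le_length hxy hnadj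
  have hlen₂ := P₂.two_le_length hxy hnadj
  have mem_tail : ∀ {u v : V} (p : G.Walk u v), p.IsPath → ∀ z ∈ p.support.tail,
      z ∈ p.support ∧ z ≠ u := fun p hp z hz => ⟨List.mem_of_mem_tail hz, fun h =>
    (List.nodup_cons.mp (p.cons_tail_support ▸ hp.support_nodup)).1 (h ▸ hz)⟩
  have hcyc : (P₁.append P₂.reverse).IsCycle := by
    refine hP₁.isCycle_append hP₂.reverse (fun z hz₁ hz₂ => ?_) (.inl hlen₁)
    obtain ⟨hz₁, hzx⟩ := mem_tail P₁ hP₁ z hz₁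
    obtain ⟨hz₂, hzy⟩ := mem_tail _ hP₂.reverse z hz₂
    rw [support_reverse, List.mem_reverse] at hz₂
    exact (hdisj z hz₁ hz₂).elim hzx hzy
  obtain ⟨c, d, hcd, hc, hd, hnot⟩ :=
    hch _ hcyc (by rw [length_append, length_reverse]; omega)
  have key : ∀ c d, G.Adj c d → c ∈ P₁.support → d ∈ P₂.support →
      s(c, d) ∈ P₁.edges ∨ s(c, d) ∈ P₂.edges := by
    intro c d hcd hc hd
    by_cases hcP₂ : c ∈ P₂.support
    · exact .inr (hc₂.mem_edges hcP₂ hd hcd)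
    by_cases hdP₁ : d ∈ P₁.support
    · exact .inl (hc₁.mem_edges hc hdP₁ hcd)
    exfalso
    rcases hcross c hc d hd hcd with rfl | rfl | rfl | rfl
    exacts [hcP₂ P₂.start_mem_support, hcP₂ P₂.end_mem_support, hdP₁ P₁.start_mem_support,
      hdP₁ P₁.end_mem_support]
  rw [mem_support_append_iff, support_reverse, List.mem_reverse] at hc hd
  rw [edges_append, edges_reverse, List.mem_append, List.mem_reverse, not_or] at hnot
  rcases hc with hc | hc <;> rcases hd with hd | hd
  · exact hnot.1 (hc₁.mem_edges hc hd hcd)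
  · exact (key c d hcd hc hd).elim hnot.1 hnot.2
  · rw [Sym2.eq_swap] at hnot
    exact (key d c hcd.symm hd hc).elim hnot.1 hnot.2
  · exact hnot.2 (hc₂.mem_edges hc hd hcd)

section MinimalSeparator

variable {S : Set V} {a b x y : V}

theorem exists_isPath_isChordless_of_minimal_separates (hS : Minimal (G.Separates · a b) S)
    (hx : x ∈ S) (hy : y ∈ S) :
    ∃ P : G.Walk x y, P.IsPath ∧ P.IsChordless ∧
      ∀ z ∈ P.support, z = x ∨ z = y ∨ G.ReachableOutside S a z := by
  obtain ⟨u, hxu, hau⟩ := exists_adj_reachableOutside_of_minimal_separates hS hx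
  obtain ⟨w, hyw, haw⟩ := exists_adj_reachableOutside_of_minimal_separates hS hy
  obtain ⟨p, hp⟩ := (hau.symm.trans haw).exists_walk
  obtain ⟨P, hP, hPc, hsub⟩ := (Walk.cons hxu (p.concat hyw.symm)).exists_isPath_isChordless
  refine ⟨P, hP, hPc, fun z hz => ?_⟩
  have hz := hsub hz
  simp only [Walk.support_cons, Walk.support_concat, List.mem_cons, List.mem_append,
    List.not_mem_nil, or_false] at hz
  rcases hz with rfl | hz | rfl
  · exact .inl rfl
  · exact .inr (.inr (hau.trans (hp z hz)))
  · exact .inr (.inl rfl)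

theorem IsChordal.isClique_of_minimal_separates (hch : G.IsChordal)
    (hS : Minimal (G.Separates · a b) S) : G.IsClique S := by
  intro x hx y hy hxy
  have hsep := hS.prop.2.2
  obtain ⟨P₁, h₁, hc₁, hA⟩ := exists_isPath_isChordless_of_minimal_separates hS hx hy
  have hS' : Minimal (G.Separates · b a) S := by simpa only [separates_comm] using hS
  obtain ⟨P₂, h₂, hc₂, hB⟩ := exists_isPath_isChordless_of_minimal_separates hS' hx hy
  refine hch.adj_of_isChordless h₁ h₂ hc₁ hc₂ (fun z hz₁ hz₂ => ?_) (fun c hc d hd hcd => ?_) hxy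
  · rcases hA z hz₁ with h | h | ha
    · exact .inl h
    · exact .inr h
    rcases hB z hz₂ with h | h | hb
    · exact .inl h
    · exact .inr h
    exact absurd (ha.trans hb.symm) hsep
  · rcases hA c hc with h | h | ha
    · exact .inl h
    · exact .inr (.inl h)
    rcases hB d hd with h | h | hb
    · exact .inr (.inr (.inl h))
    · exact .inr (.inr (.inr h))
    exact absurd ((ha.trans_adj hcd hb.right_notMem).trans hb.symm) hsep

end MinimalSeparator

def IsSimplicial (G : SimpleGraph V) (v : V) : Prop :=
  G.IsClique (G.neighborSet v)

theorem IsSimplicial.of_induce {s : Set V} {v : s} (h : (G.induce s).IsSimplicial v)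
    (hs : G.neighborSet v ⊆ s) : G.IsSimplicial v := fun c hc d hd hne =>
  h (show (G.induce s).Adj v ⟨c, hs hc⟩ from hc) (show (G.induce s).Adj v ⟨d, hs hd⟩ from hd)
    (by simpa using hne)

/-- Dirac's lemma, in the form that makes the induction go through. For non-adjacent `a`, `b`
a minimal `a`–`b` separator `S` is a clique, so `K` misses one side, say that of `b`; a
simplicial vertex of the graph induced on that side and `S`, chosen outside `S`, stays simplicial
in `G`. -/
theorem IsChordal.exists_isSimplicial_notMem [Finite V] (hch : G.IsChordal) {K : Set V}
    (hK : G.IsClique K) {v : V} (hv : v ∉ K) :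
    ∃ z ∉ K, G.IsSimplicial z := by
  induction hn : Nat.card V using Nat.strong_induction_on generalizing V with
  | _ n ih =>
  by_cases htop : G = ⊤
  · exact ⟨v, hv, (isClique_univ.mpr htop).subset (Set.subset_univ _)⟩
  obtain ⟨a, b, hab, hnadj⟩ := ne_top_iff_exists_not_adj.mp htop
  obtain ⟨S, hS⟩ := exists_minimal_separates hab hnadj
  wlog hKb : ∀ z ∈ K, ¬G.ReachableOutside S b z generalizing a b
  · push Not at hKb
    obtain ⟨c, hcK, hbc⟩ := hKb
    refine this b a hab.symm (fun h => hnadj h.symm) (by simpa only [separates_comm] using hS)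
      fun z hzK haz => hS.prop.2.2 ?_
    obtain rfl | hzc := eq_or_ne z c
    · exact haz.trans hbc.symm
    · exact (haz.trans_adj (hK hzK hcK hzc) hbc.right_notMem).trans hbc.symm
  obtain ⟨ha, hb, hsep⟩ := hS.prop
  set B : Set V := {z | G.ReachableOutside S b z} ∪ S
  have haB : a ∉ B := fun h => h.elim (fun h => hsep h.symm) ha
  obtain ⟨z, hzS, hz⟩ := ih (Nat.card B) (hn ▸ Finite.card_subtype_lt haB)
    (hch.comap (Embedding.induce B)) (K := Subtype.val ⁻¹' S)
    (fun x hx y hy hxy => hch.isClique_of_minimal_separates hS hx hy (Subtype.val_injective.ne hxy))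
    (v := ⟨b, .inl (.refl hb)⟩) hb rfl
  have hzb : G.ReachableOutside S b z := z.2.resolve_right hzS
  refine ⟨z, fun hzK => hKb z hzK hzb, hz.of_induce fun w hw => ?_⟩
  by_cases hwS : w ∈ S
  · exact .inr hwS
  · exact .inl (hzb.trans_adj hw hwS)

theorem IsChordal.exists_isSimplicial [Finite V] [Nonempty V] (hch : G.IsChordal) :
    ∃ v, G.IsSimplicial v :=
  have ⟨v⟩ := ‹Nonempty V›
  have ⟨z, _, hz⟩ := hch.exists_isSimplicial_notMem (K := ∅) (by simp) (v := v) (by simp)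
  ⟨z, hz⟩

theorem Reachable.mem_of_forall_adj_mem {s : Set V} (hs : ∀ ⦃u w⦄, u ∈ s → G.Adj u w → w ∈ s)
    {u w : V} (h : G.Reachable u w) (hu : u ∈ s) : w ∈ s := by
  obtain ⟨p⟩ := h
  induction p with
  | nil => exact hu
  | cons h _ ih => exact ih (hs hu h)

section Regular

variable [Fintype V] [DecidableRel G.Adj] {k : ℕ}

theorem isRegularOfDegree_of_le_degree (hmin : ∀ v, k ≤ G.degree v)
    (hE : 2 * G.edgeFinset.card ≤ Fintype.card V * k) : G.IsRegularOfDegree k := by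
  have hsum : ∑ v, G.degree v = ∑ _v : V, k := by
    refine le_antisymm ?_ (Finset.sum_le_sum fun v _ => hmin v)
    rwa [sum_degrees_eq_twice_card_edges, Finset.sum_const, Finset.card_univ, smul_eq_mul]
  exact fun v => (Finset.sum_eq_sum_iff_of_le (fun v _ => hmin v)).mp hsum.symm v
    (Finset.mem_univ v) |>.symm

theorem IsSimplicial.neighborFinset_eq_erase (hreg : G.IsRegularOfDegree k) {u v : V}
    (hv : G.IsSimplicial v) (hvu : G.Adj v u) :
    G.neighborFinset u = (insert v (G.neighborFinset v)).erase u := by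
  symm
  refine Finset.eq_of_subset_of_card_le (fun w hw => ?_) ?_
  · rw [Finset.mem_erase, Finset.mem_insert, mem_neighborFinset] at hw
    rw [mem_neighborFinset]
    obtain ⟨hwu, rfl | hw⟩ := hw
    · exact hvu.symm
    · exact hv hvu hw (Ne.symm hwu)
  · rw [Finset.card_erase_of_mem (Finset.mem_insert_of_mem ((mem_neighborFinset ..).mpr hvu)),
      Finset.card_insert_of_notMem (by simp), card_neighborFinset_eq_degree,
      card_neighborFinset_eq_degree, hreg, hreg]
    simp

theorem IsChordal.card_eq_of_isRegularOfDegree (hch : G.IsChordal) (hconn : G.Connected)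
    (hreg : G.IsRegularOfDegree k) : Fintype.card V = k + 1 := by
  have := hconn.nonempty
  obtain ⟨v, hv⟩ := hch.exists_isSimplicial
  set N := insert v (G.neighborFinset v)
  have hclosed : ∀ ⦃u w⦄, u ∈ (N : Set V) → G.Adj u w → w ∈ (N : Set V) := by
    intro u w hu huw
    rw [Finset.mem_coe, Finset.mem_insert] at hu
    obtain rfl | hu := hu
    · exact Finset.mem_insert_of_mem ((mem_neighborFinset ..).mpr huw)
    · rw [mem_neighborFinset] at hu
      have hw : w ∈ G.neighborFinset u := (mem_neighborFinset ..).mpr huw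
      rw [hv.neighborFinset_eq_erase hreg hu] at hw
      exact Finset.mem_of_mem_erase hw
  have hN : N = Finset.univ := Finset.eq_univ_of_forall fun w =>
    (hconn.preconnected v w).mem_of_forall_adj_mem hclosed (Finset.mem_insert_self v _)
  rw [← Finset.card_univ, ← hN, Finset.card_insert_of_notMem (by simp),
    card_neighborFinset_eq_degree, hreg]

end Regular

end SimpleGraph

theorem stmt_14_general (q k : ℕ) (hq : 2 ≤ q)
    {V : Type*} [Fintype V] (G : SimpleGraph V)
    (hcard : Fintype.card V = q * (k + 1))
    (hconn : G.Connected) (hchordal : G.IsChordal) (hmin : G.minDegree = k) :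
    q * Nat.choose (k + 1) 2 + 1 ≤ G.edgeFinset.card := by
  by_contra! hE
  have hreg : G.IsRegularOfDegree k := by
    refine G.isRegularOfDegree_of_le_degree (fun v => hmin ▸ G.minDegree_le_degree v) ?_
    have hchoose : (k + 1) * k = Nat.choose (k + 1) 2 * 2 := by
      simpa using Nat.add_one_mul_choose_eq k 1
    rw [hcard]
    nlinarith
  have hn := hchordal.card_eq_of_isRegularOfDegree hconn hreg
  rw [hcard] at hn
  nlinarith

/-- For integers `q ≥ 2` and `k ≥ 2`, every connected chordal graph of order `q * (k+1)`
and minimum degree `k` has at least `q * C(k+1, 2) + 1` edges. -/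
theorem stmt_14 (q k : ℕ) (hq : 2 ≤ q) (hk : 2 ≤ k)
    {V : Type*} [Fintype V] (G : SimpleGraph V)
    (hcard : Fintype.card V = q * (k + 1))
    (hconn : G.Connected) (hchordal : G.IsChordal) (hmin : G.minDegree = k) :
    q * Nat.choose (k + 1) 2 + 1 ≤ G.edgeFinset.card :=
  stmt_14_general q k hq G hcard hconn hchordal hmin
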